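/- arXiv:2310.17392 — 5 statements merged into one kernel-verified Lean document; each statement's English description precedes it below -/
import Mathlib

section
/- Fix 0 < v_low ≤ v̄ and an integer n ≥ 1. Let prices v_low = v₁ ≤ v₂ ≤ ⋯ ≤ vₙ ≤ v̄ be given, and set v_{n+1} := v̄. Then the supremum, over probability vectors (x₁,…,xₙ) (xᵢ ≥ 0, Σᵢxᵢ = 1), of the competitive ratio of the mechanism that posts price vᵢ with probability xᵢ over the support ambiguity set 𝓕_supp equals r = ( v₂/v₁ + Σ_{i=2}^{n} (v_{i+1} − vᵢ)/vᵢ )^{-1}, and it is attained by x₁ = r·v₂/v₁ and xᵢ = r·(v_{i+1} − vᵢ)/vᵢ for i = 2,…,n. -/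
open MeasureTheory Set

noncomputable section

/-- Hindsight optimal revenue: `OPT(F) = sup_{p ∈ [0, v̄]} p · F([p, v̄])`. -/
def hindsightOpt (vbar : ℝ) (F : Measure ℝ) : ℝ :=
  ⨆ p : Icc (0 : ℝ) vbar, (p : ℝ) * (F (Icc (p : ℝ) vbar)).toReal

/-- The support ambiguity set: probability measures on `[0, v̄]` giving full mass to
`[v_low, v̄]`. -/
def Fsupp (vlow vbar : ℝ) : Set (Measure ℝ) :=
  {F | IsProbabilityMeasure F ∧ F (Icc (0 : ℝ) vbar) = 1 ∧ F (Icc vlow vbar) = 1}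

/-- Expected revenue of the `n`-level mechanism posting price `v i` with probability `x i`. -/
def mechRev (vbar : ℝ) (n : ℕ) (v x : ℕ → ℝ) (F : Measure ℝ) : ℝ :=
  ∑ i ∈ Finset.Icc 1 n, v i * x i * (F (Icc (v i) vbar)).toReal

/-- Competitive ratio of the `n`-level mechanism over the support ambiguity set. -/
def suppCR (vlow vbar : ℝ) (n : ℕ) (v x : ℕ → ℝ) : ℝ :=
  ⨅ F : ↥(Fsupp vlow vbar), mechRev vbar n v x F.1 / hindsightOpt vbar F.1

/-!
Testing a mechanism against a point mass at `c ∈ [v_k, v_{k+1})` shows that its competitive ratio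
`s` satisfies `s · v_{k+1} ≤ ∑_{i ≤ k} vᵢ xᵢ` whenever `v_k < v_{k+1}`, and also `s · v̄ ≤ ∑ vᵢ xᵢ`.
Weighting these by `1/v_k - 1/v_{k+1}` and `1/v̄` and summing by parts gives `s / r ≤ ∑ xᵢ = 1`.
Conversely, with the weights `x = r · (v₂/v₁, (v₃ - v₂)/v₂, …)` the revenue under any `F` is
`r · (v₁ + ∑ (v_{i+1} - vᵢ) F[vᵢ, v̄])`, and this bracket dominates `p · F[p, v̄]` for every price `p`:
rounding `p ∈ (v_k, v_{k+1}]` up to `v_{k+1}` and its survival probability down to `F[v_k, v̄]`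
can only increase the revenue.
-/

open Filter

lemma mul_le_of_forall_mem_Ico {a b s S : ℝ} (hab : a < b) (h : ∀ c ∈ Ico a b, s * c ≤ S) :
    s * b ≤ S :=
  le_of_tendsto (((continuous_const_mul s).tendsto b).mono_left nhdsWithin_le_nhds)
    (eventually_of_mem (Ioo_mem_nhdsLT hab) fun c hc => h c ⟨hc.1.le, hc.2⟩)

lemma MonotoneOn.pos_of_mem_Icc {v : ℕ → ℝ} {n i : ℕ} (hv : MonotoneOn v (Icc 1 n))
    (hv1 : 0 < v 1) (hi : i ∈ Icc 1 n) : 0 < v i :=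
  hv1.trans_le (hv ⟨le_rfl, hi.1.trans hi.2⟩ hi hi.1)

lemma div_add_sum_Icc_two_eq_one_add_sum (v : ℕ → ℝ) {n : ℕ} (hn : 1 ≤ n) (hv1 : v 1 ≠ 0) :
    v 2 / v 1 + ∑ i ∈ Finset.Icc 2 n, (v (i + 1) - v i) / v i
      = 1 + ∑ i ∈ Finset.Icc 1 n, (v (i + 1) - v i) / v i := by
  rw [← Finset.add_sum_Ioc_eq_sum_Icc hn, ← Finset.Icc_add_one_left_eq_Ioc, sub_div,
    div_self hv1, one_add_one_eq_two]
  ring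

lemma sum_inv_sub_inv_mul_partialSum_add (v x : ℕ → ℝ) (n : ℕ)
    (hv : ∀ k ∈ Finset.Icc 1 n, v k ≠ 0) :
    ∑ k ∈ Finset.Icc 1 n, ((v k)⁻¹ - (v (k + 1))⁻¹) * ∑ i ∈ Finset.Icc 1 k, v i * x i
      + (∑ i ∈ Finset.Icc 1 n, v i * x i) / v (n + 1) = ∑ i ∈ Finset.Icc 1 n, x i := by
  induction n with
  | zero => simp
  | succ m ih =>
    have hm : v (m + 1) ≠ 0 := hv (m + 1) (by simp)
    rw [Finset.sum_Icc_succ_top (by omega), Finset.sum_Icc_succ_top (by omega),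
      Finset.sum_Icc_succ_top (by omega),
      ← ih fun k hk => hv k (Finset.Icc_subset_Icc_right (by omega) hk)]
    field_simp
    ring

lemma mul_le_add_sum_sub_mul_of_antitone {G : ℝ → ℝ} (hG : Antitone G) (hG0 : ∀ q, 0 ≤ G q)
    (hG1 : ∀ q, G q ≤ 1) {v : ℕ → ℝ} (hv1 : 0 ≤ v 1) (m : ℕ) (hv : MonotoneOn v (Icc 1 (m + 1))) :
    ∀ p ∈ Icc 0 (v (m + 1)), p * G p ≤ v 1 + ∑ i ∈ Finset.Icc 1 m, (v (i + 1) - v i) * G (v i) := by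
  induction m with
  | zero => intro p hp; simpa using (mul_le_of_le_one_right hp.1 (hG1 p)).trans hp.2
  | succ m ih =>
    have ih := ih (hv.mono (Icc_subset_Icc_right (by omega)))
    have hvm : 0 ≤ v (m + 1) := hv1.trans (hv ⟨le_rfl, by omega⟩ ⟨by omega, by omega⟩ (by omega))
    have hstep : v (m + 1) ≤ v (m + 2) := hv ⟨by omega, by omega⟩ ⟨by omega, le_rfl⟩ (by omega)
    intro p hp
    rw [Finset.sum_Icc_succ_top (by omega), ← add_assoc]
    by_cases hpm : p ≤ v (m + 1)
    · exact (ih p ⟨hp.1, hpm⟩).trans (le_add_of_nonneg_right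
        (mul_nonneg (sub_nonneg.2 hstep) (hG0 _)))
    · calc p * G p ≤ v (m + 2) * G (v (m + 1)) :=
            mul_le_mul hp.2 (hG (not_le.1 hpm).le) (hG0 _) (hvm.trans hstep)
        _ = v (m + 1) * G (v (m + 1)) + (v (m + 2) - v (m + 1)) * G (v (m + 1)) := by ring
        _ ≤ _ := by gcongr; exact ih _ ⟨hvm, le_rfl⟩

lemma dirac_Icc_toReal (a b c : ℝ) :
    (Measure.dirac c (Icc a b)).toReal = if c ∈ Icc a b then 1 else 0 := by
  rw [Measure.dirac_apply, indicator]
  split_ifs <;> rfl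

lemma hindsightOpt_nonneg (vbar : ℝ) (F : Measure ℝ) : 0 ≤ hindsightOpt vbar F :=
  Real.iSup_nonneg fun p => mul_nonneg p.2.1 ENNReal.toReal_nonneg

lemma hindsightOpt_le {vbar B : ℝ} {F : Measure ℝ} (hB : 0 ≤ B)
    (h : ∀ p ∈ Icc 0 vbar, p * (F (Icc p vbar)).toReal ≤ B) : hindsightOpt vbar F ≤ B :=
  Real.iSup_le (fun p => h p p.2) hB

lemma le_hindsightOpt {vbar p : ℝ} {F : Measure ℝ} [IsProbabilityMeasure F]
    (hp : p ∈ Icc 0 vbar) : p * (F (Icc p vbar)).toReal ≤ hindsightOpt vbar F := by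
  refine le_ciSup (f := fun q : Icc (0 : ℝ) vbar => (q : ℝ) * (F (Icc (q : ℝ) vbar)).toReal)
    ⟨vbar, ?_⟩ ⟨p, hp⟩
  rintro _ ⟨q, rfl⟩
  exact (mul_le_of_le_one_right q.2.1 measureReal_le_one).trans q.2.2

lemma hindsightOpt_dirac {vbar c : ℝ} (hc : c ∈ Icc 0 vbar) :
    hindsightOpt vbar (Measure.dirac c) = c := by
  refine le_antisymm (hindsightOpt_le hc.1 fun p _ => ?_) ?_
  · rw [dirac_Icc_toReal]
    split_ifs with h
    · simpa using h.1
    · simpa using hc.1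
  · simpa [dirac_Icc_toReal, hc.2] using le_hindsightOpt (F := Measure.dirac c) hc

lemma hindsightOpt_le_add_sum {n : ℕ} {v : ℕ → ℝ} (hv : MonotoneOn v (Icc 1 (n + 1)))
    (hv1 : 0 ≤ v 1) (F : Measure ℝ) [IsProbabilityMeasure F] :
    hindsightOpt (v (n + 1)) F
      ≤ v 1 + ∑ i ∈ Finset.Icc 1 n, (v (i + 1) - v i) * (F (Icc (v i) (v (n + 1)))).toReal := by
  have key := mul_le_add_sum_sub_mul_of_antitone (G := fun q => (F (Icc q (v (n + 1)))).toReal)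
    (fun a b hab => ENNReal.toReal_mono (measure_ne_top F _)
      (measure_mono (Icc_subset_Icc_left hab)))
    (fun _ => ENNReal.toReal_nonneg) (fun _ => measureReal_le_one) hv1 n hv
  have hvn : 0 ≤ v (n + 1) := hv1.trans (hv ⟨le_rfl, by omega⟩ ⟨by omega, le_rfl⟩ (by omega))
  exact hindsightOpt_le (by simpa using key 0 ⟨le_rfl, hvn⟩) key

lemma dirac_mem_Fsupp {vlow vbar c : ℝ} (hlow : 0 ≤ vlow) (hc : c ∈ Icc vlow vbar) :
    Measure.dirac c ∈ Fsupp vlow vbar :=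
  ⟨inferInstance, Measure.dirac_apply_of_mem ⟨hlow.trans hc.1, hc.2⟩,
    Measure.dirac_apply_of_mem hc⟩

lemma le_hindsightOpt_of_mem_Fsupp {vlow vbar : ℝ} {F : Measure ℝ} (hF : F ∈ Fsupp vlow vbar)
    (hlow : 0 ≤ vlow) (hbar : vlow ≤ vbar) : vlow ≤ hindsightOpt vbar F := by
  have := hF.1
  simpa [hF.2.2] using le_hindsightOpt (F := F) ⟨hlow, hbar⟩

lemma one_add_sum_sub_div_pos {n : ℕ} {v : ℕ → ℝ} (hv : MonotoneOn v (Icc 1 (n + 1)))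
    (hv1 : 0 < v 1) : 0 < 1 + ∑ k ∈ Finset.Icc 1 n, (v (k + 1) - v k) / v k :=
  add_pos_of_pos_of_nonneg one_pos <| Finset.sum_nonneg fun k hk => by
    obtain ⟨hk1, hkn⟩ := Finset.mem_Icc.1 hk
    exact div_nonneg (sub_nonneg.2 (hv ⟨hk1, by omega⟩ ⟨by omega, by omega⟩ (by omega)))
      (hv.pos_of_mem_Icc hv1 ⟨hk1, by omega⟩).le

section Mechanism

variable {vlow vbar : ℝ} {n : ℕ} {v x : ℕ → ℝ}

lemma mechRev_nonneg (h : ∀ i ∈ Finset.Icc 1 n, 0 ≤ v i * x i) (F : Measure ℝ) :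
    0 ≤ mechRev vbar n v x F :=
  Finset.sum_nonneg fun i hi => mul_nonneg (h i hi) ENNReal.toReal_nonneg

lemma mechRev_le_sum (h : ∀ i ∈ Finset.Icc 1 n, 0 ≤ v i * x i) (F : Measure ℝ)
    [IsProbabilityMeasure F] : mechRev vbar n v x F ≤ ∑ i ∈ Finset.Icc 1 n, v i * x i :=
  Finset.sum_le_sum fun i hi => mul_le_of_le_one_right (h i hi) measureReal_le_one

lemma mechRev_dirac_le_partialSum {c : ℝ} {k : ℕ} (hv : MonotoneOn v (Icc 1 (n + 1)))
    (h : ∀ i ∈ Finset.Icc 1 n, 0 ≤ v i * x i) (hk : k ≤ n) (hc : c < v (k + 1)) :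
    mechRev vbar n v x (Measure.dirac c) ≤ ∑ i ∈ Finset.Icc 1 k, v i * x i := by
  calc mechRev vbar n v x (Measure.dirac c)
      ≤ ∑ i ∈ Finset.Icc 1 n, if i ≤ k then v i * x i else 0 := by
        refine Finset.sum_le_sum fun i hi => ?_
        obtain ⟨hi1, hin⟩ := Finset.mem_Icc.1 hi
        rw [dirac_Icc_toReal]
        split_ifs with hci hik hik
        · simp
        · have := hv ⟨by omega, by omega⟩ ⟨hi1, by omega⟩ (by omega : k + 1 ≤ i)
          linarith [hci.1]
        · simpa using h i hi
        · simp
    _ = ∑ i ∈ Finset.Icc 1 k, v i * x i := by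
        rw [← Finset.sum_filter]
        congr 1
        ext i
        simp only [Finset.mem_filter, Finset.mem_Icc]
        omega

lemma suppCR_le_div (h : ∀ i ∈ Finset.Icc 1 n, 0 ≤ v i * x i) {F : Measure ℝ}
    (hF : F ∈ Fsupp vlow vbar) :
    suppCR vlow vbar n v x ≤ mechRev vbar n v x F / hindsightOpt vbar F := by
  refine ciInf_le (f := fun G : Fsupp vlow vbar => mechRev vbar n v x G.1 / hindsightOpt vbar G.1)
    ⟨0, ?_⟩ ⟨F, hF⟩
  rintro _ ⟨G, rfl⟩
  exact div_nonneg (mechRev_nonneg h _) (hindsightOpt_nonneg _ _)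

lemma le_suppCR {r : ℝ} (hlow : 0 < vlow) (hbar : vlow ≤ vbar)
    (h : ∀ F ∈ Fsupp vlow vbar, r * hindsightOpt vbar F ≤ mechRev vbar n v x F) :
    r ≤ suppCR vlow vbar n v x := by
  have : Nonempty (Fsupp vlow vbar) := ⟨⟨_, dirac_mem_Fsupp hlow.le ⟨le_rfl, hbar⟩⟩⟩
  exact le_ciInf fun F =>
    (le_div_iff₀ (hlow.trans_le (le_hindsightOpt_of_mem_Fsupp F.2 hlow.le hbar))).2 (h F F.2)

lemma suppCR_mul_le_mechRev_dirac (h : ∀ i ∈ Finset.Icc 1 n, 0 ≤ v i * x i) {c : ℝ}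
    (hlow : 0 < vlow) (hc : c ∈ Icc vlow vbar) :
    suppCR vlow vbar n v x * c ≤ mechRev vbar n v x (Measure.dirac c) := by
  have := suppCR_le_div h (dirac_mem_Fsupp hlow.le hc)
  rwa [hindsightOpt_dirac ⟨hlow.le.trans hc.1, hc.2⟩,
    le_div_iff₀ (hlow.trans_le hc.1)] at this

lemma suppCR_mul_le_partialSum (hv : MonotoneOn v (Icc 1 (n + 1))) (hv1 : 0 < v 1)
    (h : ∀ i ∈ Finset.Icc 1 n, 0 ≤ v i * x i) {k : ℕ} (hk : k ∈ Finset.Icc 1 n)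
    (hlt : v k < v (k + 1)) :
    suppCR (v 1) (v (n + 1)) n v x * v (k + 1) ≤ ∑ i ∈ Finset.Icc 1 k, v i * x i := by
  obtain ⟨hk1, hkn⟩ := Finset.mem_Icc.1 hk
  refine mul_le_of_forall_mem_Ico hlt fun c hc => ?_
  have hc' : c ∈ Icc (v 1) (v (n + 1)) :=
    ⟨(hv ⟨le_rfl, by omega⟩ ⟨hk1, by omega⟩ hk1).trans hc.1,
      hc.2.le.trans (hv ⟨by omega, by omega⟩ ⟨by omega, le_rfl⟩ (by omega))⟩
  exact (suppCR_mul_le_mechRev_dirac h hv1 hc').trans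
    (mechRev_dirac_le_partialSum hv h hkn hc.2)

lemma suppCR_mul_le_sum (hv : MonotoneOn v (Icc 1 (n + 1))) (hv1 : 0 < v 1)
    (h : ∀ i ∈ Finset.Icc 1 n, 0 ≤ v i * x i) :
    suppCR (v 1) (v (n + 1)) n v x * v (n + 1) ≤ ∑ i ∈ Finset.Icc 1 n, v i * x i :=
  (suppCR_mul_le_mechRev_dirac h hv1
    ⟨hv ⟨le_rfl, by omega⟩ ⟨by omega, le_rfl⟩ (by omega), le_rfl⟩).trans (mechRev_le_sum h _)

lemma suppCR_le_inv (hv : MonotoneOn v (Icc 1 (n + 1))) (hv1 : 0 < v 1)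
    (hx0 : ∀ i ∈ Finset.Icc 1 n, 0 ≤ x i) (hx1 : ∑ i ∈ Finset.Icc 1 n, x i = 1) :
    suppCR (v 1) (v (n + 1)) n v x ≤ (1 + ∑ k ∈ Finset.Icc 1 n, (v (k + 1) - v k) / v k)⁻¹ := by
  set s := suppCR (v 1) (v (n + 1)) n v x
  have hpos : ∀ i ∈ Icc 1 (n + 1), 0 < v i := fun i hi => hv.pos_of_mem_Icc hv1 hi
  have h : ∀ i ∈ Finset.Icc 1 n, 0 ≤ v i * x i := fun i hi => by
    obtain ⟨hi1, hin⟩ := Finset.mem_Icc.1 hi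
    exact mul_nonneg (hpos i ⟨hi1, by omega⟩).le (hx0 i hi)
  have hterm : ∀ k ∈ Finset.Icc 1 n, ((v k)⁻¹ - (v (k + 1))⁻¹) * (s * v (k + 1))
      ≤ ((v k)⁻¹ - (v (k + 1))⁻¹) * ∑ i ∈ Finset.Icc 1 k, v i * x i := by
    intro k hk
    obtain ⟨hk1, hkn⟩ := Finset.mem_Icc.1 hk
    rcases (hv ⟨hk1, by omega⟩ ⟨by omega, by omega⟩ (by omega) : v k ≤ v (k + 1)).lt_or_eq
      with hlt | heq
    · exact mul_le_mul_of_nonneg_left (suppCR_mul_le_partialSum hv hv1 h hk hlt)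
        (sub_nonneg.2 (inv_anti₀ (hpos k ⟨hk1, by omega⟩) hlt.le))
    · simp [heq]
  have hweight : ∀ k ∈ Finset.Icc 1 n,
      s * ((v (k + 1) - v k) / v k) = ((v k)⁻¹ - (v (k + 1))⁻¹) * (s * v (k + 1)) := by
    intro k hk
    obtain ⟨hk1, hkn⟩ := Finset.mem_Icc.1 hk
    have := (hpos k ⟨hk1, by omega⟩).ne'
    have := (hpos (k + 1) ⟨by omega, by omega⟩).ne'
    field_simp
  have hvn := hpos (n + 1) ⟨by omega, le_rfl⟩
  rw [← one_div, le_div_iff₀ (one_add_sum_sub_div_pos hv hv1)]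
  calc s * (1 + ∑ k ∈ Finset.Icc 1 n, (v (k + 1) - v k) / v k)
      = ∑ k ∈ Finset.Icc 1 n, ((v k)⁻¹ - (v (k + 1))⁻¹) * (s * v (k + 1)) + s := by
        rw [mul_add, mul_one, Finset.mul_sum, add_comm, Finset.sum_congr rfl hweight]
    _ ≤ ∑ k ∈ Finset.Icc 1 n, ((v k)⁻¹ - (v (k + 1))⁻¹) * ∑ i ∈ Finset.Icc 1 k, v i * x i
        + (∑ i ∈ Finset.Icc 1 n, v i * x i) / v (n + 1) :=
        add_le_add (Finset.sum_le_sum hterm)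
          ((le_div_iff₀ hvn).2 (suppCR_mul_le_sum hv hv1 h))
    _ = 1 := by
      rw [sum_inv_sub_inv_mul_partialSum_add v x n fun k hk =>
        (hpos k (Finset.mem_Icc.1 (Finset.Icc_subset_Icc_right (by omega) hk))).ne', hx1]

end Mechanism

def optimalLevelProbs (v : ℕ → ℝ) (r : ℝ) (i : ℕ) : ℝ :=
  if i = 1 then r * (v 2 / v 1) else r * ((v (i + 1) - v i) / v i)

section OptimalLevelProbs

variable {n : ℕ} {v : ℕ → ℝ} {r : ℝ}

lemma optimalLevelProbs_nonneg {i : ℕ} (hv : MonotoneOn v (Icc 1 (n + 1))) (hv1 : 0 < v 1)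
    (hr : 0 ≤ r) (hi : i ∈ Finset.Icc 1 n) : 0 ≤ optimalLevelProbs v r i := by
  obtain ⟨hi1, hin⟩ := Finset.mem_Icc.1 hi
  unfold optimalLevelProbs
  split_ifs
  · exact mul_nonneg hr (div_nonneg (hv.pos_of_mem_Icc hv1 ⟨by omega, by omega⟩).le hv1.le)
  · exact mul_nonneg hr (div_nonneg (sub_nonneg.2 (hv ⟨hi1, by omega⟩ ⟨by omega, by omega⟩
      (by omega))) (hv.pos_of_mem_Icc hv1 ⟨hi1, by omega⟩).le)

lemma sum_optimalLevelProbs (hn : 1 ≤ n) :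
    ∑ i ∈ Finset.Icc 1 n, optimalLevelProbs v r i
      = r * (v 2 / v 1 + ∑ i ∈ Finset.Icc 2 n, (v (i + 1) - v i) / v i) := by
  rw [← Finset.add_sum_Ioc_eq_sum_Icc hn, ← Finset.Icc_add_one_left_eq_Ioc, mul_add,
    Finset.mul_sum]
  congr 1
  exact Finset.sum_congr rfl fun i hi => if_neg (by have := (Finset.mem_Icc.1 hi).1; omega)

lemma mechRev_optimalLevelProbs {vbar : ℝ} (hn : 1 ≤ n) (hv : ∀ i ∈ Finset.Icc 1 n, v i ≠ 0)
    {F : Measure ℝ} (hF : F (Icc (v 1) vbar) = 1) :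
    mechRev vbar n v (optimalLevelProbs v r) F
      = r * (v 1 + ∑ i ∈ Finset.Icc 1 n, (v (i + 1) - v i) * (F (Icc (v i) vbar)).toReal) := by
  have hv1 : v 1 ≠ 0 := hv 1 (Finset.mem_Icc.2 ⟨le_rfl, hn⟩)
  have hrest : ∀ i ∈ Finset.Ioc 1 n, v i * optimalLevelProbs v r i * (F (Icc (v i) vbar)).toReal
      = r * ((v (i + 1) - v i) * (F (Icc (v i) vbar)).toReal) := by
    intro i hi
    obtain ⟨hi1, hin⟩ := Finset.mem_Ioc.1 hi
    have := hv i (Finset.mem_Icc.2 ⟨hi1.le, hin⟩)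
    rw [optimalLevelProbs, if_neg hi1.ne']
    field_simp
  rw [mechRev, ← Finset.add_sum_Ioc_eq_sum_Icc hn, ← Finset.add_sum_Ioc_eq_sum_Icc hn,
    Finset.sum_congr rfl hrest, ← Finset.mul_sum, hF, ENNReal.toReal_one, optimalLevelProbs,
    if_pos rfl]
  field_simp
  ring

lemma le_suppCR_optimalLevelProbs (hn : 1 ≤ n) (hv : MonotoneOn v (Icc 1 (n + 1)))
    (hv1 : 0 < v 1) (hr : 0 ≤ r) :
    r ≤ suppCR (v 1) (v (n + 1)) n v (optimalLevelProbs v r) := by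
  refine le_suppCR hv1 (hv ⟨le_rfl, by omega⟩ ⟨by omega, le_rfl⟩ (by omega)) fun F hF => ?_
  have := hF.1
  rw [mechRev_optimalLevelProbs hn (fun i hi => (hv.pos_of_mem_Icc hv1
    (Finset.mem_Icc.1 (Finset.Icc_subset_Icc_right (by omega) hi))).ne') hF.2.2]
  exact mul_le_mul_of_nonneg_left (hindsightOpt_le_add_sum hv hv1.le F) hr

end OptimalLevelProbs

theorem stmt0_general (vlow vbar : ℝ) (hlow : 0 < vlow)
    (n : ℕ) (hn : 1 ≤ n) (v : ℕ → ℝ)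
    (hv1 : v 1 = vlow)
    (hmono : ∀ i, 1 ≤ i → i < n → v i ≤ v (i + 1))
    (hvn : v n ≤ vbar) (hvtop : v (n + 1) = vbar)
    (r : ℝ)
    (hr : r = (v 2 / v 1 + ∑ i ∈ Finset.Icc 2 n, (v (i + 1) - v i) / v i)⁻¹) :
    (∀ x : ℕ → ℝ, (∀ i ∈ Finset.Icc 1 n, 0 ≤ x i) →
        ∑ i ∈ Finset.Icc 1 n, x i = 1 → suppCR vlow vbar n v x ≤ r) ∧
    (∃ x : ℕ → ℝ, (∀ i ∈ Finset.Icc 1 n, 0 ≤ x i) ∧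
        ∑ i ∈ Finset.Icc 1 n, x i = 1 ∧
        x 1 = r * (v 2 / v 1) ∧
        (∀ i, 2 ≤ i → i ≤ n → x i = r * ((v (i + 1) - v i) / v i)) ∧
        suppCR vlow vbar n v x = r) := by
  subst hv1 hvtop
  have hv : MonotoneOn v (Icc 1 (n + 1)) := monotoneOn_of_le_succ ordConnected_Icc
    fun i _ hi hi' => by
      rw [Order.succ_eq_add_one] at hi' ⊢
      rcases (show i < n ∨ i = n by have := hi'.2; omega) with hin | rfl
      exacts [hmono i hi.1 hin, hvn]
  rw [div_add_sum_Icc_two_eq_one_add_sum v hn hlow.ne'] at hr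
  have hr0 : 0 < r := hr ▸ inv_pos.2 (one_add_sum_sub_div_pos hv hlow)
  have hx0 : ∀ i ∈ Finset.Icc 1 n, 0 ≤ optimalLevelProbs v r i :=
    fun i hi => optimalLevelProbs_nonneg hv hlow hr0.le hi
  have hx1 : ∑ i ∈ Finset.Icc 1 n, optimalLevelProbs v r i = 1 := by
    rw [sum_optimalLevelProbs hn, div_add_sum_Icc_two_eq_one_add_sum v hn hlow.ne', hr,
      inv_mul_cancel₀ (one_add_sum_sub_div_pos hv hlow).ne']
  have hCR (x : ℕ → ℝ) (hx0 : ∀ i ∈ Finset.Icc 1 n, 0 ≤ x i)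
      (hx1 : ∑ i ∈ Finset.Icc 1 n, x i = 1) : suppCR (v 1) (v (n + 1)) n v x ≤ r :=
    hr ▸ suppCR_le_inv hv hlow hx0 hx1
  exact ⟨hCR, optimalLevelProbs v r, hx0, hx1, if_pos rfl, fun i hi _ => if_neg (by omega),
    le_antisymm (hCR _ hx0 hx1) (le_suppCR_optimalLevelProbs hn hv hlow hr0.le)⟩

/-- For fixed prices `v_low = v₁ ≤ ⋯ ≤ vₙ ≤ v̄` (with `v_{n+1} = v̄`), the supremum over
probability vectors of the competitive ratio over the support ambiguity set equals
`r = (v₂/v₁ + ∑_{i=2}^n (v_{i+1} - vᵢ)/vᵢ)⁻¹`, attained by `x₁ = r·v₂/v₁`,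
`xᵢ = r·(v_{i+1} - vᵢ)/vᵢ`. -/
theorem stmt0 (vlow vbar : ℝ) (hlow : 0 < vlow) (hbar : vlow ≤ vbar)
    (n : ℕ) (hn : 1 ≤ n) (v : ℕ → ℝ)
    (hv1 : v 1 = vlow)
    (hmono : ∀ i, 1 ≤ i → i < n → v i ≤ v (i + 1))
    (hvn : v n ≤ vbar) (hvtop : v (n + 1) = vbar)
    (r : ℝ)
    (hr : r = (v 2 / v 1 + ∑ i ∈ Finset.Icc 2 n, (v (i + 1) - v i) / v i)⁻¹) :
    (∀ x : ℕ → ℝ, (∀ i ∈ Finset.Icc 1 n, 0 ≤ x i) →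
        ∑ i ∈ Finset.Icc 1 n, x i = 1 → suppCR vlow vbar n v x ≤ r) ∧
    (∃ x : ℕ → ℝ, (∀ i ∈ Finset.Icc 1 n, 0 ≤ x i) ∧
        ∑ i ∈ Finset.Icc 1 n, x i = 1 ∧
        x 1 = r * (v 2 / v 1) ∧
        (∀ i, 2 ≤ i → i ≤ n → x i = r * ((v (i + 1) - v i) / v i)) ∧
        suppCR vlow vbar n v x = r) :=
  stmt0_general vlow vbar hlow n hn v hv1 hmono hvn hvtop r hr
end
end

section
/- Fix 0 < μ < v̄. The maximum over v₁ ∈ [0, μ] of min{ v₁/v̄, (μ − v₁)/(v̄ − v₁) } equals 1 − √(1 − μ/v̄), and it is attained at the unique point v₁ = v̄ − √(v̄² − μ·v̄), where the two terms in the minimum are equal. -/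
open Set

/-- For `0 < μ < v̄`, the maximum over `v₁ ∈ [0, μ]` of `min{v₁/v̄, (μ-v₁)/(v̄-v₁)}` is
`1 - √(1 - μ/v̄)`, attained uniquely at `v₁ = v̄ - √(v̄² - μv̄)`, where both terms coincide. -/
theorem stmt6 (μ vbar : ℝ) (hμ : 0 < μ) (hμv : μ < vbar)
    (v1 : ℝ) (hv1 : v1 = vbar - Real.sqrt (vbar ^ 2 - μ * vbar)) :
    v1 ∈ Icc (0 : ℝ) μ ∧
    min (v1 / vbar) ((μ - v1) / (vbar - v1)) = 1 - Real.sqrt (1 - μ / vbar) ∧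
    (∀ w ∈ Icc (0 : ℝ) μ,
      min (w / vbar) ((μ - w) / (vbar - w)) ≤ 1 - Real.sqrt (1 - μ / vbar)) ∧
    (∀ w ∈ Icc (0 : ℝ) μ,
      min (w / vbar) ((μ - w) / (vbar - w)) = 1 - Real.sqrt (1 - μ / vbar) → w = v1) ∧
    v1 / vbar = (μ - v1) / (vbar - v1) := by
  have hvb : 0 < vbar := hμ.trans hμv
  set s := Real.sqrt (vbar ^ 2 - μ * vbar) with hsdef
  have hpos : 0 < vbar ^ 2 - μ * vbar := by nlinarith
  have hs0 : 0 < s := Real.sqrt_pos.mpr hpos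
  have hs2 : s ^ 2 = vbar ^ 2 - μ * vbar := Real.sq_sqrt hpos.le
  have hsv : s < vbar := by nlinarith
  have hsμ : vbar - μ ≤ s := by nlinarith
  have hv10 : 0 ≤ v1 := by rw [hv1]; linarith
  have hv1μ : v1 ≤ μ := by rw [hv1]; linarith
  have hsqrt : Real.sqrt (1 - μ / vbar) = s / vbar := by
    rw [show (1 - μ / vbar) = (s / vbar) ^ 2 by field_simp; nlinarith]
    exact Real.sqrt_sq (by positivity)
  have hdv1 : 0 < vbar - v1 := by linarith
  have heq : v1 / vbar = (μ - v1) / (vbar - v1) := by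
    rw [div_eq_div_iff hvb.ne' hdv1.ne']
    rw [hv1]; nlinarith
  have hval : v1 / vbar = 1 - Real.sqrt (1 - μ / vbar) := by
    rw [hsqrt, hv1]; field_simp
  refine ⟨⟨hv10, hv1μ⟩, ?_, ?_, ?_, heq⟩
  · rw [← heq, min_self, hval]
  · intro w hw
    rcases le_or_gt w v1 with h | h
    · calc min (w / vbar) ((μ - w) / (vbar - w)) ≤ w / vbar := min_le_left _ _
        _ ≤ v1 / vbar := by gcongr
        _ = 1 - Real.sqrt (1 - μ / vbar) := hval
    · have hdw : 0 < vbar - w := by linarith [hw.2]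
      calc min (w / vbar) ((μ - w) / (vbar - w)) ≤ (μ - w) / (vbar - w) := min_le_right _ _
        _ ≤ (μ - v1) / (vbar - v1) := by
            rw [div_le_div_iff₀ hdw hdv1]; nlinarith
        _ = 1 - Real.sqrt (1 - μ / vbar) := by rw [← heq, hval]
  · intro w hw hmin
    by_contra hne
    rcases lt_or_gt_of_ne hne with h | h
    · have h1 : min (w / vbar) ((μ - w) / (vbar - w)) ≤ w / vbar := min_le_left _ _
      have h2 : w / vbar < v1 / vbar := by gcongr
      rw [hmin, ← hval] at h1; linarith
    · have hdw : 0 < vbar - w := by linarith [hw.2]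
      have h1 : min (w / vbar) ((μ - w) / (vbar - w)) ≤ (μ - w) / (vbar - w) :=
        min_le_right _ _
      have h2 : (μ - w) / (vbar - w) < (μ - v1) / (vbar - v1) := by
        rw [div_lt_div_iff₀ hdw hdv1]
        nlinarith [mul_pos (sub_pos.mpr h) (sub_pos.mpr hμv)]
      rw [hmin, ← hval, heq] at h1; linarith
end

section
/- Fix v̄ > 0 and for μ ∈ (0, v̄) set v₁(μ) = v̄ − √(v̄² − μ·v̄). Then: (i) the map μ ↦ √(v₁(μ)·v̄) is strictly increasing on (0, v̄), and √(v₁(μ)·v̄) ≥ μ if and only if μ ≤ (√5 − 1)·v̄/2; (ii) the map μ ↦ ( v₁(μ) + √(v₁(μ)² + 8v₁(μ)v̄) )/4 is strictly increasing on (0, v̄), and ( v₁(μ) + √(v₁(μ)² + 8v₁(μ)v̄) )/4 ≤ μ if and only if μ ≥ (√17 − 1)·v̄/8. -/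
open Set

noncomputable section

/-- The optimal lower price `v₁(μ) = v̄ - √(v̄² - μv̄)` of the 2-level mechanism under the mean
ambiguity set. -/
def lowPrice (vbar μ : ℝ) : ℝ := vbar - Real.sqrt (vbar ^ 2 - μ * vbar)

lemma lowPrice_pos {vbar μ : ℝ} (hv : 0 < vbar) (hμ : μ ∈ Ioo (0:ℝ) vbar) :
    0 < lowPrice vbar μ := by
  obtain ⟨h0, h1⟩ := hμ
  have hnn : 0 ≤ vbar ^ 2 - μ * vbar := by nlinarith
  have : Real.sqrt (vbar ^ 2 - μ * vbar) < vbar := by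
    rw [Real.sqrt_lt' hv]; nlinarith
  unfold lowPrice; linarith

lemma lowPrice_le {vbar μ : ℝ} (hv : 0 < vbar) (hμ : μ ∈ Ioo (0:ℝ) vbar) :
    lowPrice vbar μ ≤ μ := by
  obtain ⟨h0, h1⟩ := hμ
  have : vbar - μ ≤ Real.sqrt (vbar ^ 2 - μ * vbar) := by
    apply Real.le_sqrt_of_sq_le; nlinarith
  unfold lowPrice; linarith

lemma lowPrice_mono {vbar : ℝ} (hv : 0 < vbar) :
    StrictMonoOn (lowPrice vbar) (Ioo (0:ℝ) vbar) := by
  intro a ha b hb hab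
  have : Real.sqrt (vbar ^ 2 - b * vbar) < Real.sqrt (vbar ^ 2 - a * vbar) := by
    apply Real.sqrt_lt_sqrt
    · nlinarith [hb.2]
    · nlinarith
  unfold lowPrice; linarith

set_option maxHeartbeats 1600000 in
/-- (i) `μ ↦ √(v₁(μ)v̄)` is strictly increasing on `(0, v̄)` and is `≥ μ` iff
`μ ≤ (√5 - 1)v̄/2`; (ii) `μ ↦ (v₁(μ) + √(v₁(μ)² + 8v₁(μ)v̄))/4` is strictly increasing on
`(0, v̄)` and is `≤ μ` iff `μ ≥ (√17 - 1)v̄/8`. -/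
theorem stmt10 (vbar : ℝ) (hv : 0 < vbar) :
    StrictMonoOn (fun μ => Real.sqrt (lowPrice vbar μ * vbar)) (Ioo 0 vbar) ∧
    (∀ μ ∈ Ioo (0 : ℝ) vbar,
      μ ≤ Real.sqrt (lowPrice vbar μ * vbar) ↔ μ ≤ (Real.sqrt 5 - 1) * vbar / 2) ∧
    StrictMonoOn
      (fun μ => (lowPrice vbar μ +
        Real.sqrt (lowPrice vbar μ ^ 2 + 8 * lowPrice vbar μ * vbar)) / 4) (Ioo 0 vbar) ∧
    (∀ μ ∈ Ioo (0 : ℝ) vbar,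
      (lowPrice vbar μ +
        Real.sqrt (lowPrice vbar μ ^ 2 + 8 * lowPrice vbar μ * vbar)) / 4 ≤ μ ↔
        (Real.sqrt 17 - 1) * vbar / 8 ≤ μ) := by
  refine ⟨?_, ?_, ?_, ?_⟩
  · -- (i) monotonicity
    intro a ha b hb hab
    have h1 := lowPrice_pos hv ha
    have h2 := lowPrice_mono hv ha hb hab
    exact Real.sqrt_lt_sqrt (by positivity) (by nlinarith)
  · -- (i) iff
    intro μ hμ
    obtain ⟨h0, h1⟩ := hμ
    have hnn : 0 ≤ vbar ^ 2 - μ * vbar := by nlinarith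
    set s := Real.sqrt (vbar ^ 2 - μ * vbar) with hs
    have hs0 : 0 ≤ s := Real.sqrt_nonneg _
    have hs2 : s ^ 2 = vbar ^ 2 - μ * vbar := Real.sq_sqrt hnn
    have h5 : Real.sqrt 5 ^ 2 = 5 := Real.sq_sqrt (by norm_num)
    have h5nn : 0 ≤ Real.sqrt 5 := Real.sqrt_nonneg _
    have hlp : lowPrice vbar μ = vbar - s := rfl
    clear_value s
    rw [Real.le_sqrt h0.le (by nlinarith [lowPrice_pos hv ⟨h0, h1⟩]), hlp]
    constructor
    · intro h
      -- μ² ≤ (v̄ - s)v̄, so s·v̄ ≤ v̄² - μ², square it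
      have hsq : (s * vbar) ^ 2 ≤ (vbar ^ 2 - μ ^ 2) ^ 2 := by
        apply pow_le_pow_left₀ (by positivity) (by nlinarith) 2
      have hsv : (s * vbar) ^ 2 = (vbar ^ 2 - μ * vbar) * vbar ^ 2 := by
        rw [mul_pow, hs2]
      have key : μ ^ 2 + μ * vbar ≤ vbar ^ 2 := by
        nlinarith [hsq, hsv, mul_pos h0 (sub_pos.mpr h1)]
      -- now μ ≤ (√5 - 1)v̄/2 ⟸ (2μ + v̄)² ≤ 5v̄²
      have : 2 * μ + vbar ≤ Real.sqrt 5 * vbar := by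
        have := Real.le_sqrt (x := (2 * μ + vbar) / vbar) (y := 5)
          (by positivity) (by norm_num)
        have h' : ((2 * μ + vbar) / vbar) ^ 2 ≤ 5 := by
          rw [div_pow]; rw [div_le_iff₀ (by positivity)]; ring_nf; nlinarith
        have h'' := this.mpr h'
        calc 2 * μ + vbar = (2 * μ + vbar) / vbar * vbar := by field_simp
          _ ≤ Real.sqrt 5 * vbar := by
              apply mul_le_mul_of_nonneg_right h'' hv.le
      linarith
    · intro h
      have key : μ ^ 2 + μ * vbar ≤ vbar ^ 2 := by nlinarith
      -- show s·v̄ ≤ v̄² - μ²; squares suffice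
      have hsv : (s * vbar) ^ 2 = (vbar ^ 2 - μ * vbar) * vbar ^ 2 := by
        rw [mul_pow, hs2]
      have hsq : (s * vbar) ^ 2 ≤ (vbar ^ 2 - μ ^ 2) ^ 2 := by
        nlinarith [hsv, mul_nonneg (mul_nonneg h0.le (sub_pos.mpr h1).le)
          (show (0:ℝ) ≤ vbar ^ 2 - μ * vbar - μ ^ 2 by linarith)]
      have hle : s * vbar ≤ vbar ^ 2 - μ ^ 2 :=
        le_of_pow_le_pow_left₀ two_ne_zero (by nlinarith) hsq
      nlinarith
  · -- (ii) monotonicity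
    intro a ha b hb hab
    have h1 := lowPrice_pos hv ha
    have h2 := lowPrice_mono hv ha hb hab
    set p := lowPrice vbar a
    set q := lowPrice vbar b
    have hsq : Real.sqrt (p ^ 2 + 8 * p * vbar) < Real.sqrt (q ^ 2 + 8 * q * vbar) :=
      Real.sqrt_lt_sqrt (by positivity) (by nlinarith)
    simp only
    linarith
  · -- (ii) iff
    intro μ hμ
    obtain ⟨h0, h1⟩ := hμ
    have hnn : 0 ≤ vbar ^ 2 - μ * vbar := by nlinarith
    set s := Real.sqrt (vbar ^ 2 - μ * vbar) with hs
    have hs0 : 0 ≤ s := Real.sqrt_nonneg _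
    have hs2 : s ^ 2 = vbar ^ 2 - μ * vbar := Real.sq_sqrt hnn
    have hp0 : 0 < lowPrice vbar μ := lowPrice_pos hv ⟨h0, h1⟩
    have hpμ : lowPrice vbar μ ≤ μ := lowPrice_le hv ⟨h0, h1⟩
    have hlp : lowPrice vbar μ = vbar - s := rfl
    have h17 : Real.sqrt 17 ^ 2 = 17 := Real.sq_sqrt (by norm_num)
    have h17nn : 0 ≤ Real.sqrt 17 := Real.sqrt_nonneg _
    set p := lowPrice vbar μ
    clear_value p
    clear_value s
    have hdiv : (p + Real.sqrt (p ^ 2 + 8 * p * vbar)) / 4 ≤ μ ↔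
        Real.sqrt (p ^ 2 + 8 * p * vbar) ≤ 4 * μ - p := by
      constructor <;> intro h <;> linarith
    rw [hdiv, Real.sqrt_le_iff]
    have hineq : p * (vbar + μ) ≤ 2 * μ ^ 2 ↔ (Real.sqrt 17 - 1) * vbar / 8 ≤ μ := by
      constructor
      · intro h
        -- (v̄ - s)(v̄ + μ) ≤ 2μ², so (v̄ - μ)(v̄ + 2μ) ≤ s(v̄ + μ)
        have h' : (vbar - μ) * (vbar + 2 * μ) ≤ s * (vbar + μ) := by
          rw [hlp] at h; nlinarith
        have hsq : ((vbar - μ) * (vbar + 2 * μ)) ^ 2 ≤ (s * (vbar + μ)) ^ 2 := by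
          apply pow_le_pow_left₀ (by nlinarith) h' 2
        have hsv2 : (s * (vbar + μ)) ^ 2 = (vbar ^ 2 - μ * vbar) * (vbar + μ) ^ 2 := by
          rw [mul_pow, hs2]
        have key : vbar ^ 2 ≤ 4 * μ ^ 2 + μ * vbar := by
          nlinarith [hsq, hsv2, mul_pos h0 (sub_pos.mpr h1)]
        -- √17 v̄ ≤ 8μ + v̄
        have : Real.sqrt 17 * vbar ≤ 8 * μ + vbar := by
          have h2 : Real.sqrt 17 ≤ (8 * μ + vbar) / vbar := by
            rw [show Real.sqrt 17 = Real.sqrt 17 from rfl]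
            have : Real.sqrt 17 ≤ Real.sqrt (((8 * μ + vbar) / vbar) ^ 2) := by
              apply Real.sqrt_le_sqrt
              rw [div_pow, le_div_iff₀ (by positivity)]
              nlinarith
            rwa [Real.sqrt_sq (by positivity)] at this
          calc Real.sqrt 17 * vbar ≤ (8 * μ + vbar) / vbar * vbar :=
                mul_le_mul_of_nonneg_right h2 hv.le
            _ = 8 * μ + vbar := by field_simp
        linarith
      · intro h
        have ha : 0 ≤ 8 * μ + vbar - Real.sqrt 17 * vbar := by linarith
        have hb : 0 ≤ 8 * μ + vbar + Real.sqrt 17 * vbar := by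
          have := mul_nonneg h17nn hv.le; linarith
        have h17v : (Real.sqrt 17 * vbar) ^ 2 = 17 * vbar ^ 2 := by
          rw [mul_pow, h17]
        have key : vbar ^ 2 ≤ 4 * μ ^ 2 + μ * vbar := by
          nlinarith [mul_nonneg ha hb, h17v]
        have hsv2 : (s * (vbar + μ)) ^ 2 = (vbar ^ 2 - μ * vbar) * (vbar + μ) ^ 2 := by
          rw [mul_pow, hs2]
        have hsq : ((vbar - μ) * (vbar + 2 * μ)) ^ 2 ≤ (s * (vbar + μ)) ^ 2 := by
          nlinarith [hsv2, mul_nonneg (mul_nonneg h0.le (sub_pos.mpr h1).le)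
            (show (0:ℝ) ≤ 4 * μ ^ 2 + μ * vbar - vbar ^ 2 by linarith)]
        have h' : (vbar - μ) * (vbar + 2 * μ) ≤ s * (vbar + μ) :=
          le_of_pow_le_pow_left₀ two_ne_zero (by positivity) hsq
        rw [hlp]; nlinarith
    constructor
    · rintro ⟨h4, h⟩
      rw [← hineq]; nlinarith
    · intro h
      refine ⟨by linarith, ?_⟩
      rw [← hineq] at h
      nlinarith
end
end

section
/- Let μ > 0 and σ > 0, and let v₁ ∈ (0, μ) be defined as in the 2-level mean–variance approximation: v₁ solves (μ − v₁)³ = (2v₁ − μ)σ² if σ ≤ √(√5 − 2)·μ, and solves (μ − v₁)³ = (2/(9 + √5))·(7v₁ − 3μ)σ² if σ > √(√5 − 2)·μ. Then the ratio r = ( 2√( (1/v₁)( μ + σ²/(μ − v₁) ) ) − 1 )^{-1} satisfies r ≥ ( (7√3/3)·√( 4/7 + (σ/μ)² ) )^{-1}. -/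
open Set

private lemma aux_case1 (μ σ v1 : ℝ) (hμ : 0 < μ) (hσ : 0 < σ)
    (h0 : 0 < v1) (h1 : v1 < μ)
    (hc : (μ - v1) ^ 3 = (2 * v1 - μ) * σ ^ 2) :
    12 * μ ^ 2 * (μ * (μ - v1) + σ ^ 2) ≤ (28 * μ ^ 2 + 49 * σ ^ 2) * (v1 * (μ - v1)) := by
  have hμv : 0 < μ - v1 := sub_pos.mpr h1
  have h2v : 0 < 2 * v1 - μ := by
    nlinarith [pow_pos hμv 3, mul_pos hσ hσ]
  have hG : 0 < 44 * v1 * μ ^ 2 - 28 * μ ^ 3 + 49 * (μ - v1) ^ 3 := by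
    nlinarith [mul_pos h2v (mul_pos hμ hμ), pow_pos hμ 3,
      mul_nonneg (mul_nonneg (sq_nonneg (2 * v1 - μ)) hμ.le) (le_of_lt hμv),
      mul_nonneg (sq_nonneg (2 * v1 - μ)) hμ.le,
      mul_nonneg (sq_nonneg (2 * v1 - μ)) hμv.le]
  have hident : ((28 * μ ^ 2 + 49 * σ ^ 2) * (v1 * (μ - v1)) -
      12 * μ ^ 2 * (μ * (μ - v1) + σ ^ 2)) * (2 * v1 - μ) =
      (μ - v1) * v1 * (44 * v1 * μ ^ 2 - 28 * μ ^ 3 + 49 * (μ - v1) ^ 3) := by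
    linear_combination (12 * μ ^ 2 - 49 * v1 * (μ - v1)) * hc
  nlinarith [hident, mul_pos (mul_pos hμv h0) hG, h2v]

private lemma aux_case2 (μ σ v1 : ℝ) (hμ : 0 < μ) (hσ : 0 < σ)
    (h0 : 0 < v1) (h1 : v1 < μ)
    (hc : (9 + Real.sqrt 5) * (μ - v1) ^ 3 = 2 * (7 * v1 - 3 * μ) * σ ^ 2) :
    12 * μ ^ 2 * (μ * (μ - v1) + σ ^ 2) ≤ (28 * μ ^ 2 + 49 * σ ^ 2) * (v1 * (μ - v1)) := by
  have hμv : 0 < μ - v1 := sub_pos.mpr h1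
  have hs5 : Real.sqrt 5 < 3 := by
    nlinarith [Real.sq_sqrt (by norm_num : (0:ℝ) ≤ 5), Real.sqrt_nonneg 5]
  have hs5' : (0:ℝ) ≤ Real.sqrt 5 := Real.sqrt_nonneg 5
  set k : ℝ := 9 + Real.sqrt 5 with hk
  have hk9 : (9:ℝ) ≤ k := by rw [hk]; linarith
  have hk12 : k ≤ 12 := by rw [hk]; linarith
  have hkpos : 0 < k := by linarith
  have h37 : 3 * μ < 7 * v1 := by
    nlinarith [pow_pos hμv 3, mul_pos hσ hσ, mul_pos hkpos (pow_pos hμv 3)]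
  -- S_h = (56 v1 - 24 μ) μ² - k (μ-v1)² (7 v1 - 4 μ) > 0
  have hS : 0 < (56 * v1 - 24 * μ) * μ ^ 2 - k * (μ - v1) ^ 2 * (7 * v1 - 4 * μ) := by
    rcases le_or_gt (7 * v1) (4 * μ) with h47 | h47
    · nlinarith [mul_nonneg (mul_nonneg hkpos.le (sq_nonneg (μ - v1))) (by linarith : (0:ℝ) ≤ 4 * μ - 7 * v1),
        mul_pos (by linarith : (0:ℝ) < 56 * v1 - 24 * μ) (mul_pos hμ hμ)]
    · -- substitution a = 7v1-4μ ≥ 0, b = μ-v1 > 0 gives all-positive coefficients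
      have ha : (0:ℝ) < 7 * v1 - 4 * μ := by linarith
      have h12 : k * (μ - v1) ^ 2 * (7 * v1 - 4 * μ) ≤ 12 * (μ - v1) ^ 2 * (7 * v1 - 4 * μ) := by
        nlinarith [mul_nonneg (sq_nonneg (μ - v1)) ha.le]
      nlinarith [h12, pow_pos hμv 3, mul_nonneg (mul_nonneg ha.le ha.le) hμv.le,
        mul_nonneg ha.le (mul_pos hμv hμv).le,
        mul_nonneg (mul_nonneg ha.le ha.le) ha.le]
  have hident : ((28 * μ ^ 2 + 49 * σ ^ 2) * (v1 * (μ - v1)) -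
      12 * μ ^ 2 * (μ * (μ - v1) + σ ^ 2)) * (2 * (7 * v1 - 3 * μ)) =
      (μ - v1) * (7 * v1 - 3 * μ) *
        ((56 * v1 - 24 * μ) * μ ^ 2 - k * (μ - v1) ^ 2 * (7 * v1 - 4 * μ)) := by
    linear_combination (12 * μ ^ 2 - 49 * v1 * (μ - v1)) * hc
  nlinarith [hident, mul_pos (mul_pos hμv (by linarith : (0:ℝ) < 7 * v1 - 3 * μ)) hS, h37]

/-- The competitive-ratio guarantee `r` of the 2-level mean–variance approximation is bounded
below by `((7√3/3)·√(4/7 + (σ/μ)²))⁻¹`. -/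
theorem stmt12 (μ σ : ℝ) (hμ : 0 < μ) (hσ : 0 < σ)
    (v1 : ℝ) (hv1 : v1 ∈ Ioo 0 μ)
    (hcase1 : σ ≤ Real.sqrt (Real.sqrt 5 - 2) * μ →
      (μ - v1) ^ 3 = (2 * v1 - μ) * σ ^ 2)
    (hcase2 : Real.sqrt (Real.sqrt 5 - 2) * μ < σ →
      (μ - v1) ^ 3 = (2 / (9 + Real.sqrt 5)) * (7 * v1 - 3 * μ) * σ ^ 2) :
    ((7 * Real.sqrt 3 / 3) * Real.sqrt (4 / 7 + (σ / μ) ^ 2))⁻¹ ≤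
      (2 * Real.sqrt ((1 / v1) * (μ + σ ^ 2 / (μ - v1))) - 1)⁻¹ := by
  obtain ⟨h0, h1⟩ := hv1
  have hμv : 0 < μ - v1 := sub_pos.mpr h1
  -- the key polynomial inequality (4f ≤ A² after clearing denominators)
  have hkey : 12 * μ ^ 2 * (μ * (μ - v1) + σ ^ 2) ≤
      (28 * μ ^ 2 + 49 * σ ^ 2) * (v1 * (μ - v1)) := by
    rcases le_or_gt σ (Real.sqrt (Real.sqrt 5 - 2) * μ) with h | h
    · exact aux_case1 μ σ v1 hμ hσ h0 h1 (hcase1 h)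
    · have hs5' : (0:ℝ) ≤ Real.sqrt 5 := Real.sqrt_nonneg 5
      have h9 : (9:ℝ) + Real.sqrt 5 ≠ 0 := by positivity
      have hc := hcase2 h
      have hc' : (9 + Real.sqrt 5) * (μ - v1) ^ 3 = 2 * (7 * v1 - 3 * μ) * σ ^ 2 := by
        rw [hc]; field_simp
      exact aux_case2 μ σ v1 hμ hσ h0 h1 hc'
  set f : ℝ := (1 / v1) * (μ + σ ^ 2 / (μ - v1)) with hf
  set A : ℝ := (7 * Real.sqrt 3 / 3) * Real.sqrt (4 / 7 + (σ / μ) ^ 2) with hA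
  have hfeq : f = (μ * (μ - v1) + σ ^ 2) / (v1 * (μ - v1)) := by
    rw [hf]; field_simp; try ring
  have hfpos : 1 < f := by
    rw [hfeq]
    rw [lt_div_iff₀ (by positivity)]
    nlinarith [sq_nonneg σ, mul_pos hσ hσ, mul_pos h0 hμv]
  have hApos : 0 ≤ A := by positivity
  have hA2 : A ^ 2 = 49 / 3 * (4 / 7 + (σ / μ) ^ 2) := by
    rw [hA, mul_pow, Real.sq_sqrt (by positivity : (0:ℝ) ≤ 4 / 7 + (σ / μ) ^ 2),
      div_pow, mul_pow, Real.sq_sqrt (by norm_num : (0:ℝ) ≤ 3)]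
    norm_num
  have h4f : 4 * f ≤ A ^ 2 := by
    rw [hA2, hfeq, show (4:ℝ) * ((μ * (μ - v1) + σ ^ 2) / (v1 * (μ - v1))) =
      (4 * (μ * (μ - v1) + σ ^ 2)) / (v1 * (μ - v1)) by ring,
      div_le_iff₀ (by positivity)]
    have hμ2 : (0:ℝ) < μ ^ 2 := by positivity
    rw [div_pow]
    rw [show (49:ℝ) / 3 * (4 / 7 + σ ^ 2 / μ ^ 2) * (v1 * (μ - v1)) =
      ((28 * μ ^ 2 + 49 * σ ^ 2) * (v1 * (μ - v1))) / (3 * μ ^ 2) by field_simp; ring,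
      le_div_iff₀ (by positivity)]
    nlinarith [hkey]
  have hsf : 2 * Real.sqrt f ≤ A := by
    have h1' : Real.sqrt (4 * f) ≤ Real.sqrt (A ^ 2) := Real.sqrt_le_sqrt h4f
    rwa [Real.sqrt_sq hApos, show (4:ℝ) * f = 2 ^ 2 * f by ring,
      Real.sqrt_mul (by norm_num : (0:ℝ) ≤ 2 ^ 2),
      Real.sqrt_sq (by norm_num : (0:ℝ) ≤ 2)] at h1'
  have hB : 1 < 2 * Real.sqrt f - 1 := by
    have : Real.sqrt 1 < Real.sqrt f := Real.sqrt_lt_sqrt (by norm_num) hfpos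
    rw [Real.sqrt_one] at this
    linarith
  have hB0 : 0 < 2 * Real.sqrt f - 1 := by linarith
  have hBA : 2 * Real.sqrt f - 1 ≤ A := by linarith
  exact inv_anti₀ hB0 hBA
end

section
/- Fix 0 < ω ≤ v̄ and ξ ∈ (0, 1]. Then: (i) for any posted price v₁ with 0 < v₁ ≤ ω, the competitive ratio inf_{F ∈ 𝓕_quant} v₁·F([v₁, v̄]) / OPT(F) equals min{ ξ, v₁/v̄ }; (ii) for any posted price v₁ with ω < v₁ ≤ v̄ (assuming ω < v̄), this infimum equals 0; (iii) consequently the supremum over posted prices v₁ ∈ (0, v̄] of the competitive ratio equals 𝓡₁ = min{ ξ, ω/v̄ }, attained at v₁ = min{ ω, ξ·v̄ }. -/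
open MeasureTheory Set

noncomputable section

/-- The quantile ambiguity set: probability measures on `[0, v̄]` with `F([ω, v̄]) ≥ ξ`. -/
def Fquant (ω ξ vbar : ℝ) : Set (Measure ℝ) :=
  {F | IsProbabilityMeasure F ∧ F (Icc (0 : ℝ) vbar) = 1 ∧ ξ ≤ (F (Icc ω vbar)).toReal}

/-- Competitive ratio of the deterministic posted price `v1` over the quantile ambiguity set. -/
def postCRquant (ω ξ vbar v1 : ℝ) : ℝ :=
  ⨅ F : ↥(Fquant ω ξ vbar), v1 * (F.1 (Icc v1 vbar)).toReal / hindsightOpt vbar F.1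

lemma toReal_le_one' (F : Measure ℝ) [IsProbabilityMeasure F] (s : Set ℝ) :
    (F s).toReal ≤ 1 := by
  have h := prob_le_one (μ := F) (s := s)
  have := ENNReal.toReal_mono (by norm_num) h
  simpa using this

lemma opt_bdd (vbar : ℝ) (hv : 0 ≤ vbar) (F : Measure ℝ) [IsProbabilityMeasure F] :
    BddAbove (Set.range fun p : Icc (0 : ℝ) vbar => (p : ℝ) * (F (Icc (p : ℝ) vbar)).toReal) := by
  refine ⟨vbar, ?_⟩
  rintro x ⟨p, rfl⟩
  have h1 := toReal_le_one' F (Icc (p : ℝ) vbar)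
  have h0 : (0:ℝ) ≤ (F (Icc (p : ℝ) vbar)).toReal := ENNReal.toReal_nonneg
  show (p : ℝ) * (F (Icc (p : ℝ) vbar)).toReal ≤ vbar
  calc (p : ℝ) * (F (Icc (p : ℝ) vbar)).toReal ≤ vbar * 1 := mul_le_mul p.2.2 h1 h0 hv
  _ = vbar := mul_one _

lemma opt_ge (vbar : ℝ) (F : Measure ℝ) [IsProbabilityMeasure F] (hv : 0 ≤ vbar)
    (p : ℝ) (hp : p ∈ Icc (0:ℝ) vbar) :
    p * (F (Icc p vbar)).toReal ≤ hindsightOpt vbar F :=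
  le_ciSup (opt_bdd vbar hv F) (⟨p, hp⟩ : Icc (0:ℝ) vbar)

lemma opt_nonneg (vbar : ℝ) (F : Measure ℝ) [IsProbabilityMeasure F] (hv : 0 ≤ vbar) :
    0 ≤ hindsightOpt vbar F := by
  have := opt_ge vbar F hv 0 ⟨le_refl 0, hv⟩
  simpa using this

/-- Two-point measure: mass ξ at vbar, mass 1-ξ at a. -/
def Fa (ξ a vbar : ℝ) : Measure ℝ :=
  (ENNReal.ofReal ξ) • Measure.dirac vbar + (ENNReal.ofReal (1 - ξ)) • Measure.dirac a

lemma Fa_apply (ξ a vbar : ℝ) (s : Set ℝ) :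
    Fa ξ a vbar s = ENNReal.ofReal ξ * (s.indicator 1 vbar) +
      ENNReal.ofReal (1 - ξ) * (s.indicator 1 a) := by
  simp [Fa, Measure.dirac_apply, smul_eq_mul]

lemma Fa_isProb (ξ a vbar : ℝ) (hξ0 : 0 ≤ ξ) (hξ1 : ξ ≤ 1) :
    IsProbabilityMeasure (Fa ξ a vbar) := by
  constructor
  rw [Fa_apply]
  simp [indicator_apply]
  rw [← ENNReal.ofReal_add hξ0 (by linarith)]
  norm_num

lemma Fa_Icc_toReal (ξ a vbar p : ℝ) (hξ0 : 0 ≤ ξ) (hξ1 : ξ ≤ 1)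
    (hp : p ≤ vbar) (ha : a ≤ vbar) :
    ((Fa ξ a vbar) (Icc p vbar)).toReal = if p ≤ a then 1 else ξ := by
  rw [Fa_apply]
  have hne : ∀ (c : ℝ) (x : ℝ), ENNReal.ofReal c * ((Icc p vbar).indicator 1 x) ≠ ⊤ := by
    intro c x
    exact ENNReal.mul_ne_top ENNReal.ofReal_ne_top
      (by simp [indicator_apply]; split_ifs <;> simp)
  rw [ENNReal.toReal_add (hne _ _) (hne _ _)]
  simp only [indicator_apply, mem_Icc, Pi.one_apply]
  split_ifs with h1 h2 h2 <;>
    simp_all [ENNReal.toReal_ofReal, hξ0]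

lemma Fa_mem (ω ξ a vbar : ℝ) (hξ0 : 0 < ξ) (hξ1 : ξ ≤ 1) (hω : ω ≤ vbar)
    (ha0 : 0 ≤ a) (ha : a ≤ vbar) :
    Fa ξ a vbar ∈ Fquant ω ξ vbar := by
  refine ⟨Fa_isProb ξ a vbar hξ0.le hξ1, ?_, ?_⟩
  · rw [Fa_apply]
    simp [indicator_apply, mem_Icc, ha0, ha, le_trans ha0 ha]
    rw [← ENNReal.ofReal_add hξ0.le (by linarith)]
    norm_num
  · haveI := Fa_isProb ξ a vbar hξ0.le hξ1
    have : Fa ξ a vbar (Icc vbar vbar) ≤ Fa ξ a vbar (Icc ω vbar) :=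
      measure_mono (Icc_subset_Icc_left hω)
    have hvv : ξ ≤ (Fa ξ a vbar (Icc vbar vbar)).toReal := by
      rw [Fa_apply]
      simp [indicator_apply, mem_Icc]
      split_ifs with h
      · rw [ENNReal.toReal_add ENNReal.ofReal_ne_top ENNReal.ofReal_ne_top]
        rw [ENNReal.toReal_ofReal hξ0.le, ENNReal.toReal_ofReal (by linarith)]
        linarith
      · simp [ENNReal.toReal_ofReal hξ0.le]
    exact le_trans hvv (ENNReal.toReal_mono (measure_ne_top _ _) this)

lemma Fa_opt (ξ a vbar : ℝ) (hξ0 : 0 ≤ ξ) (hξ1 : ξ ≤ 1) (hv : 0 < vbar)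
    (ha0 : 0 ≤ a) (ha : a ≤ vbar) :
    hindsightOpt vbar (Fa ξ a vbar) = max a (vbar * ξ) := by
  haveI := Fa_isProb ξ a vbar hξ0 hξ1
  haveI : Nonempty (Icc (0:ℝ) vbar) := ⟨⟨0, le_refl 0, hv.le⟩⟩
  apply le_antisymm
  · apply ciSup_le
    rintro ⟨p, hp0, hpv⟩
    show p * ((Fa ξ a vbar) (Icc p vbar)).toReal ≤ _
    rw [Fa_Icc_toReal ξ a vbar p hξ0 hξ1 hpv ha]
    split_ifs with h
    · calc p * 1 = p := mul_one p
      _ ≤ a := h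
      _ ≤ _ := le_max_left _ _
    · calc p * ξ ≤ vbar * ξ := mul_le_mul_of_nonneg_right hpv hξ0
      _ ≤ _ := le_max_right _ _
  · apply max_le
    · have := opt_ge vbar (Fa ξ a vbar) hv.le a ⟨ha0, ha⟩
      rwa [Fa_Icc_toReal ξ a vbar a hξ0 hξ1 ha ha, if_pos le_rfl, mul_one] at this
    · have := opt_ge vbar (Fa ξ a vbar) hv.le vbar ⟨hv.le, le_rfl⟩
      rw [Fa_Icc_toReal ξ a vbar vbar hξ0 hξ1 le_rfl ha] at this
      split_ifs at this with h
      · calc vbar * ξ ≤ vbar * 1 := mul_le_mul_of_nonneg_left hξ1 hv.le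
        _ = vbar := mul_one _
        _ ≤ _ := by rwa [mul_one] at this
      · exact this

lemma cr_bddBelow (ω ξ vbar v1 : ℝ) (hv1 : 0 ≤ v1) (hv : 0 ≤ vbar) :
    BddBelow (Set.range fun F : ↥(Fquant ω ξ vbar) =>
      v1 * (F.1 (Icc v1 vbar)).toReal / hindsightOpt vbar F.1) := by
  refine ⟨0, ?_⟩
  rintro x ⟨F, rfl⟩
  haveI := F.2.1
  exact div_nonneg (mul_nonneg hv1 ENNReal.toReal_nonneg) (opt_nonneg vbar F.1 hv)

lemma partI (vbar ω ξ : ℝ) (hvbar : 0 < vbar) (hω0 : 0 < ω) (hωv : ω ≤ vbar)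
    (hξ0 : 0 < ξ) (hξ1 : ξ ≤ 1) (v1 : ℝ) (hv1 : 0 < v1) (hv1ω : v1 ≤ ω) :
    postCRquant ω ξ vbar v1 = min ξ (v1 / vbar) := by
  have hv1v : v1 ≤ vbar := le_trans hv1ω hωv
  have hbdd := cr_bddBelow ω ξ vbar v1 hv1.le hvbar.le
  have hFvb := Fa_mem ω ξ vbar vbar hξ0 hξ1 hωv hvbar.le le_rfl
  haveI : Nonempty ↥(Fquant ω ξ vbar) := ⟨⟨_, hFvb⟩⟩
  apply le_antisymm
  · -- upper bound: inf ≤ min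
    rcases le_or_gt v1 (vbar * ξ) with hcase | hcase
    · -- use a = vbar
      have hmin : min ξ (v1 / vbar) = v1 / vbar := by
        rw [min_eq_right]
        rw [div_le_iff₀ hvbar]
        linarith
      rw [hmin]
      have hle := ciInf_le hbdd (⟨_, hFvb⟩ : ↥(Fquant ω ξ vbar))
      rw [show postCRquant ω ξ vbar v1 = _ from rfl]
      refine le_trans hle ?_
      simp only
      rw [Fa_Icc_toReal ξ vbar vbar v1 hξ0.le hξ1 hv1v le_rfl, if_pos hv1v,
        Fa_opt ξ vbar vbar hξ0.le hξ1 hvbar hvbar.le le_rfl,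
        max_eq_left (by nlinarith), mul_one]
    · -- use a close to v1
      have hmin : min ξ (v1 / vbar) = ξ := by
        rw [min_eq_left]
        rw [le_div_iff₀ hvbar]
        linarith
      rw [hmin]
      apply le_of_forall_pos_le_add
      intro ε hε
      set a := max (v1 * ξ / (ξ + ε)) ((vbar * ξ + v1) / 2) with ha_def
      have hξε : 0 < ξ + ε := by linarith
      have havb : vbar * ξ < a := lt_max_of_lt_right (by linarith)
      have ha0 : 0 ≤ a := le_trans (by positivity) havb.le
      have hapos : 0 < a := lt_of_le_of_lt (by positivity) havb
      have hav1 : a < v1 := by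
        apply max_lt
        · rw [div_lt_iff₀ hξε]; nlinarith
        · linarith
      have hFa := Fa_mem ω ξ a vbar hξ0 hξ1 hωv ha0 (by linarith)
      have hle := ciInf_le hbdd (⟨_, hFa⟩ : ↥(Fquant ω ξ vbar))
      refine le_trans hle ?_
      simp only
      rw [Fa_Icc_toReal ξ a vbar v1 hξ0.le hξ1 hv1v (by linarith), if_neg (by linarith),
        Fa_opt ξ a vbar hξ0.le hξ1 hvbar ha0 (by linarith), max_eq_left havb.le]
      rw [div_le_iff₀ hapos]
      have : v1 * ξ / (ξ + ε) ≤ a := le_max_left _ _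
      rw [div_le_iff₀ hξε] at this
      linarith
  · -- lower bound: min ≤ inf
    apply le_ciInf
    rintro ⟨F, hF1, hF2, hF3⟩
    haveI := hF1
    simp only
    set q := (F (Icc v1 vbar)).toReal with hq_def
    have hq : ξ ≤ q :=
      le_trans hF3 (ENNReal.toReal_mono (measure_ne_top _ _)
        (measure_mono (Icc_subset_Icc_left hv1ω)))
    have hqnn : (0:ℝ) ≤ q := ENNReal.toReal_nonneg
    have hq1 : q ≤ 1 := toReal_le_one' F _
    haveI : Nonempty (Icc (0:ℝ) vbar) := ⟨⟨0, le_refl 0, hvbar.le⟩⟩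
    have hopt_le : hindsightOpt vbar F ≤ max v1 (vbar * q) := by
      apply ciSup_le
      rintro ⟨p, hp0, hpv⟩
      show p * (F (Icc p vbar)).toReal ≤ _
      rcases le_or_gt p v1 with h | h
      · refine le_trans ?_ (le_max_left _ _)
        calc p * (F (Icc p vbar)).toReal ≤ v1 * 1 :=
          mul_le_mul h (toReal_le_one' F _) ENNReal.toReal_nonneg hv1.le
        _ = v1 := mul_one _
      · refine le_trans ?_ (le_max_right _ _)
        have hmono : (F (Icc p vbar)).toReal ≤ q :=
          ENNReal.toReal_mono (measure_ne_top _ _)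
            (measure_mono (Icc_subset_Icc_left h.le))
        exact mul_le_mul hpv hmono ENNReal.toReal_nonneg hvbar.le
    have hopt_ge : v1 * q ≤ hindsightOpt vbar F :=
      opt_ge vbar F hvbar.le v1 ⟨hv1.le, hv1v⟩
    have hopt_pos : 0 < hindsightOpt vbar F := lt_of_lt_of_le (by nlinarith) hopt_ge
    rw [le_div_iff₀ hopt_pos]
    have hminnn : 0 ≤ min ξ (v1 / vbar) := le_min hξ0.le (by positivity)
    calc min ξ (v1 / vbar) * hindsightOpt vbar F
        ≤ min ξ (v1 / vbar) * max v1 (vbar * q) :=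
          mul_le_mul_of_nonneg_left hopt_le hminnn
      _ ≤ v1 * q := by
          rcases le_total v1 (vbar * q) with h | h
          · rw [max_eq_right h]
            calc min ξ (v1 / vbar) * (vbar * q) ≤ (v1 / vbar) * (vbar * q) :=
              mul_le_mul_of_nonneg_right (min_le_right _ _) (by positivity)
            _ = v1 * q := by field_simp
          · rw [max_eq_left h]
            calc min ξ (v1 / vbar) * v1 ≤ ξ * v1 :=
              mul_le_mul_of_nonneg_right (min_le_left _ _) hv1.le
            _ ≤ v1 * q := by nlinarith

lemma partII (vbar ω ξ : ℝ) (hvbar : 0 < vbar) (hω0 : 0 < ω) (hωv : ω ≤ vbar)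
    (hξ0 : 0 < ξ) (hξ1 : ξ ≤ 1) (v1 : ℝ) (hv1 : ω < v1) (hv1v : v1 ≤ vbar) :
    postCRquant ω ξ vbar v1 = 0 := by
  have hmem : Measure.dirac ω ∈ Fquant ω ξ vbar := by
    refine ⟨Measure.dirac.isProbabilityMeasure, ?_, ?_⟩
    · rw [Measure.dirac_apply]
      simp [indicator_apply, mem_Icc, hω0.le, hωv]
    · rw [Measure.dirac_apply]
      simp [indicator_apply, mem_Icc, hωv]
      linarith
  haveI : Nonempty ↥(Fquant ω ξ vbar) := ⟨⟨_, hmem⟩⟩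
  have hbdd := cr_bddBelow ω ξ vbar v1 (by linarith) hvbar.le
  apply le_antisymm
  · have hle := ciInf_le hbdd (⟨_, hmem⟩ : ↥(Fquant ω ξ vbar))
    refine le_trans hle ?_
    simp only
    rw [Measure.dirac_apply]
    simp [indicator_apply, mem_Icc, not_le.mpr hv1]
  · apply le_ciInf
    intro F
    haveI := F.2.1
    exact div_nonneg (mul_nonneg (by linarith) ENNReal.toReal_nonneg)
      (opt_nonneg vbar F.1 hvbar.le)
/-- Under the quantile ambiguity set: (i) posting `v₁ ∈ (0, ω]` achieves competitive ratio
`min{ξ, v₁/v̄}`; (ii) if `ω < v̄`, posting `v₁ ∈ (ω, v̄]` achieves `0`; (iii) the optimal posted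
price is `v₁ = min{ω, ξv̄}` with optimal ratio `𝓡₁ = min{ξ, ω/v̄}`. -/
theorem stmt13 (vbar ω ξ : ℝ) (hvbar : 0 < vbar) (hω0 : 0 < ω) (hωv : ω ≤ vbar)
    (hξ0 : 0 < ξ) (hξ1 : ξ ≤ 1) :
    (∀ v1 : ℝ, 0 < v1 → v1 ≤ ω →
      postCRquant ω ξ vbar v1 = min ξ (v1 / vbar)) ∧
    (ω < vbar → ∀ v1 : ℝ, ω < v1 → v1 ≤ vbar → postCRquant ω ξ vbar v1 = 0) ∧
    (postCRquant ω ξ vbar (min ω (ξ * vbar)) = min ξ (ω / vbar) ∧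
      ∀ v1 ∈ Ioc (0 : ℝ) vbar, postCRquant ω ξ vbar v1 ≤ min ξ (ω / vbar)) := by
  refine ⟨fun v1 h1 h2 => partI vbar ω ξ hvbar hω0 hωv hξ0 hξ1 v1 h1 h2,
    fun _ v1 h1 h2 => partII vbar ω ξ hvbar hω0 hωv hξ0 hξ1 v1 h1 h2, ?_, ?_⟩
  · rw [partI vbar ω ξ hvbar hω0 hωv hξ0 hξ1 _ (lt_min hω0 (by positivity)) (min_le_left _ _)]
    rcases le_total ω (ξ * vbar) with h | h
    · rw [min_eq_left h]
    · rw [min_eq_right h, mul_div_cancel_right₀ ξ hvbar.ne', min_self, eq_comm,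
        min_eq_left]
      rw [le_div_iff₀ hvbar]
      linarith
  · rintro v1 ⟨h1, h2⟩
    rcases le_or_gt v1 ω with h | h
    · rw [partI vbar ω ξ hvbar hω0 hωv hξ0 hξ1 v1 h1 h]
      exact min_le_min le_rfl (by gcongr)
    · rw [partII vbar ω ξ hvbar hω0 (le_trans h.le h2) hξ0 hξ1 v1 h h2]
      positivity
end
end
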